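/- Let e = (1,3,1,1,0) ∈ ℤ^5, so that Q_11(e) = 0, and let M = {x ∈ ℤ^5 : B_11(x, e) = 0}. Then the subgroup of M generated by e together with all roots of M (i.e., all r ∈ M with Q_11(r) > 0 such that Q_11(r) divides 2·B_11(r, x) for every x ∈ M) is a proper subgroup of M. -/

import Mathlib

/-!
On `M = e^⊥` one has `x₂ + x₃ = 11x₀ - 3x₁`, and completing squares gives
`2 Q(r) = (r₂ - r₃)² + 11 (r₁ - 3r₀)² + 2 r₄²`. The quantities `r₂ - r₃` and `r₄` are
`B(r, ·)` evaluated at the vectors `(0,0,1,-1,0)` and `(0,0,0,0,1)` of `M`, so for a root `Q(r)`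
divides twice each of them; if `r₁ - 3r₀` were odd, the summand `11 (r₁ - 3r₀)² ≥ 11` makes `Q(r)`
too large for that unless both vanish, and then `2 Q(r) = 11 (r₁ - 3r₀)²` is odd. Hence every
root, and also `e`, satisfies `x₀ + x₁ ≡ 0 (mod 2)`, while `(0,1,-3,0,0) ∈ M` does not.
-/

/-- The bilinear form `B_p(x,y) = -p·x_0·y_0 + x_1·y_1 + … + x_n·y_n` on `ℤ^{n+1}`. -/
def Bform (p : ℤ) {n : ℕ} (x y : Fin (n + 1) → ℤ) : ℤ :=
  -p * x 0 * y 0 + ∑ i ∈ Finset.univ.filter (fun i : Fin (n + 1) => i ≠ 0), x i * y i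

/-- The quadratic form `Q_p(x) = B_p(x,x)`. -/
def Qform (p : ℤ) {n : ℕ} (x : Fin (n + 1) → ℤ) : ℤ := Bform p x x

/-- The primitive null vector `e`. -/
def eVec : Fin 5 → ℤ := ![1, 3, 1, 1, 0]

lemma eq_zero_of_dvd_two_mul_of_sq_add_le {m t c : ℤ} (hc : 4 < c) (hdvd : m ∣ 2 * t)
    (hle : t ^ 2 + c ≤ 2 * m) : t = 0 := by
  by_contra ht
  have hm : m ≤ 2 * |t| := by
    simpa [abs_mul] using Int.le_of_dvd (by positivity) ((dvd_abs _ _).2 hdvd)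
  nlinarith [sq_abs t, sq_nonneg (|t| - 2)]

lemma even_of_two_mul_eq_sq_add_mul_sq_add_two_mul_sq {m s β γ c : ℤ} (hc : 4 < c)
    (hc_odd : Odd c) (hm : 2 * m = s ^ 2 + c * β ^ 2 + 2 * γ ^ 2) (hs : m ∣ 2 * s)
    (hγ : m ∣ 2 * γ) : Even β := by
  by_contra hβ
  have hβ_odd : Odd β := Int.not_even_iff_odd.1 hβ
  have hβ_sq : 1 ≤ β ^ 2 := by
    have hβ0 : β ≠ 0 := by rintro rfl; exact hβ ⟨0, rfl⟩
    nlinarith [Int.one_le_abs hβ0, sq_abs β]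
  have hs0 : s = 0 := eq_zero_of_dvd_two_mul_of_sq_add_le hc hs (by nlinarith [sq_nonneg γ])
  have hγ0 : γ = 0 := eq_zero_of_dvd_two_mul_of_sq_add_le hc hγ (by nlinarith [sq_nonneg s])
  subst hs0 hγ0
  have hodd : Odd (2 * m) := by simpa [hm] using hc_odd.mul (hβ_odd.pow (n := 2))
  exact Int.not_odd_iff_even.2 (even_two_mul m) hodd

lemma Bform_apply (p : ℤ) (x y : Fin 5 → ℤ) :
    Bform p x y = -p * x 0 * y 0 + (x 1 * y 1 + x 2 * y 2 + x 3 * y 3 + x 4 * y 4) := by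
  simp [Bform, Finset.sum_filter, Fin.sum_univ_five]

lemma Bform_add_left (p : ℤ) {n : ℕ} (y x x' : Fin (n + 1) → ℤ) :
    Bform p (x + x') y = Bform p x y + Bform p x' y := by
  simp only [Bform, Pi.add_apply, add_mul, Finset.sum_add_distrib]
  ring

def BformLeft (p : ℤ) {n : ℕ} (y : Fin (n + 1) → ℤ) : (Fin (n + 1) → ℤ) →+ ℤ :=
  AddMonoidHom.mk' (fun x => Bform p x y) (Bform_add_left p y)

lemma two_mul_Qform_eq_of_Bform_eVec_eq_zero {r : Fin 5 → ℤ} (hr : Bform 11 r eVec = 0) :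
    2 * Qform 11 r = Bform 11 r ![0, 0, 1, -1, 0] ^ 2 + 11 * (r 1 - 3 * r 0) ^ 2
      + 2 * Bform 11 r ![0, 0, 0, 0, 1] ^ 2 := by
  simp [Qform, Bform_apply, eVec] at hr ⊢
  linear_combination (11 * r 0 - 3 * r 1 + r 2 + r 3) * hr

lemma two_dvd_add_of_dvd_two_mul_Bform {r : Fin 5 → ℤ} (hr : Bform 11 r eVec = 0)
    (hdvd : ∀ x : Fin 5 → ℤ, Bform 11 x eVec = 0 → Qform 11 r ∣ 2 * Bform 11 r x) :
    2 ∣ r 0 + r 1 := by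
  have hβ : Even (r 1 - 3 * r 0) :=
    even_of_two_mul_eq_sq_add_mul_sq_add_two_mul_sq (by norm_num) (by decide)
      (two_mul_Qform_eq_of_Bform_eVec_eq_zero hr) (hdvd _ (by decide)) (hdvd _ (by decide))
  obtain ⟨k, hk⟩ := hβ
  exact ⟨k + 2 * r 0, by omega⟩

def parityHom : (Fin 5 → ℤ) →+ ZMod 2 :=
  (Int.castAddHom (ZMod 2)).comp
    (Pi.evalAddMonoidHom (fun _ : Fin 5 => ℤ) 0 + Pi.evalAddMonoidHom (fun _ : Fin 5 => ℤ) 1)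

lemma parityHom_eq_zero_iff (x : Fin 5 → ℤ) : parityHom x = 0 ↔ 2 ∣ x 0 + x 1 :=
  ZMod.intCast_zmod_eq_zero_iff_dvd _ 2

theorem stmt14 :
    Qform 11 eVec = 0 ∧
    ((AddSubgroup.closure (insert eVec
        {r : Fin 5 → ℤ | Bform 11 r eVec = 0 ∧ 0 < Qform 11 r ∧
          ∀ x : Fin 5 → ℤ, Bform 11 x eVec = 0 → Qform 11 r ∣ 2 * Bform 11 r x}) :
        Set (Fin 5 → ℤ)) ⊂ {x : Fin 5 → ℤ | Bform 11 x eVec = 0}) := by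
  refine ⟨by decide, ?_⟩
  set G := AddSubgroup.closure (insert eVec
    {r : Fin 5 → ℤ | Bform 11 r eVec = 0 ∧ 0 < Qform 11 r ∧
      ∀ x : Fin 5 → ℤ, Bform 11 x eVec = 0 → Qform 11 r ∣ 2 * Bform 11 r x})
  have hG_le_perp : G ≤ (BformLeft 11 eVec).ker := by
    rw [AddSubgroup.closure_le]
    rintro r (rfl | ⟨hr, -⟩)
    exacts [show Bform 11 eVec eVec = 0 by decide, hr]
  have hG_le_even : G ≤ parityHom.ker := by
    rw [AddSubgroup.closure_le]
    rintro r (rfl | ⟨hr, -, hdvd⟩)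
    · exact (parityHom_eq_zero_iff _).2 (by decide)
    · exact (parityHom_eq_zero_iff _).2 (two_dvd_add_of_dvd_two_mul_Bform hr hdvd)
  refine ⟨fun x hx => hG_le_perp hx, fun hperp_le => ?_⟩
  have hw : parityHom ![0, 1, -3, 0, 0] = 0 :=
    hG_le_even (hperp_le (show Bform 11 ![0, 1, -3, 0, 0] eVec = 0 by decide))
  exact absurd ((parityHom_eq_zero_iff _).1 hw) (by decide)
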